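/- arXiv:quant-ph/0305035 — 2 statements merged into one kernel-verified Lean document; each statement's English description precedes it below -/
import Mathlib

section
/- Let N be a quantum channel and let ρ0 be a positive definite density matrix on its input space. Then there exists a Hermitian matrix τ on the input space such that χ_N(ρ) ≤ χ_N(ρ0) + Tr(τ(ρ − ρ0)) for every density matrix ρ on the input space (a supporting linear functional for the concave function χ_N at the interior point ρ0). -/
open scoped Kronecker Matrix ComplexOrder

noncomputable section

/-- The von Neumann entropy `H(ρ) = -∑ᵢ λᵢ log λᵢ` of a Hermitian matrix,
where the `λᵢ` are its eigenvalues (with the convention `0 log 0 = 0`,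
which holds automatically since `Real.log 0 = 0`). -/
def vNEntropy {n : Type} [Fintype n] [DecidableEq n] (ρ : Matrix n n ℂ) : ℝ :=
  if h : ρ.IsHermitian then -∑ i, h.eigenvalues i * Real.log (h.eigenvalues i) else 0

/-- A density matrix: positive semidefinite with trace 1. -/
def IsDensityMatrix {n : Type} [Fintype n] [DecidableEq n] (ρ : Matrix n n ℂ) : Prop :=
  ρ.PosSemidef ∧ ρ.trace = 1

/-- The rank-one matrix `|v⟩⟨v|`. -/
def outer {n : Type} [Fintype n] (v : n → ℂ) : Matrix n n ℂ :=
  Matrix.vecMulVec v (star v)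

/-- A unit vector. -/
def IsUnitVec {n : Type} [Fintype n] (v : n → ℂ) : Prop :=
  ∑ a, ‖v a‖ ^ 2 = 1

/-- A quantum channel, given by a finite family of Kraus operators `A k`
satisfying the completeness relation `∑ k, (A k)ᴴ * A k = 1`. -/
structure QChannel (I O : Type) [Fintype I] [DecidableEq I] [Fintype O] [DecidableEq O] :
    Type 1 where
  ι : Type
  [instFintype : Fintype ι]
  A : ι → Matrix O I ℂ
  complete : ∑ k, (A k)ᴴ * A k = 1

attribute [instance] QChannel.instFintype

/-- The action `N(ρ) = ∑ₖ Aₖ ρ Aₖᴴ` of a channel on a matrix. -/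
def QChannel.app {I O : Type} [Fintype I] [DecidableEq I] [Fintype O] [DecidableEq O]
    (N : QChannel I O) (ρ : Matrix I I ℂ) : Matrix O O ℂ :=
  ∑ k, N.A k * ρ * (N.A k)ᴴ

theorem kronecker_conjT {l m n p : Type} (A : Matrix l m ℂ) (B : Matrix n p ℂ) :
    (A ⊗ₖ B)ᴴ = Aᴴ ⊗ₖ Bᴴ := by
  ext ⟨i, j⟩ ⟨k, s⟩
  simp [Matrix.conjTranspose_apply, mul_comm]

theorem sum_kronecker_sum {ι₁ ι₂ l m n p : Type} [Fintype ι₁] [Fintype ι₂]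
    (A : ι₁ → Matrix l m ℂ) (B : ι₂ → Matrix n p ℂ) :
    (∑ i, A i) ⊗ₖ (∑ j, B j) = ∑ k : ι₁ × ι₂, A k.1 ⊗ₖ B k.2 := by
  ext ⟨x, y⟩ ⟨x', y'⟩
  simp only [Matrix.sum_apply, Matrix.kroneckerMap_apply, Finset.sum_mul_sum]
  exact (Fintype.sum_prod_type (fun k : ι₁ × ι₂ => A k.1 x x' * B k.2 y y')).symm

/-- The tensor-product channel `N₁ ⊗ N₂`: its Kraus operators are the Kronecker
products of the Kraus operators of the two factors. -/
def QChannel.prod {I₁ O₁ I₂ O₂ : Type}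
    [Fintype I₁] [DecidableEq I₁] [Fintype O₁] [DecidableEq O₁]
    [Fintype I₂] [DecidableEq I₂] [Fintype O₂] [DecidableEq O₂]
    (N₁ : QChannel I₁ O₁) (N₂ : QChannel I₂ O₂) : QChannel (I₁ × I₂) (O₁ × O₂) where
  ι := N₁.ι × N₂.ι
  A := fun k => N₁.A k.1 ⊗ₖ N₂.A k.2
  complete := by
    have h1 : ∀ k : N₁.ι × N₂.ι, (N₁.A k.1 ⊗ₖ N₂.A k.2)ᴴ * (N₁.A k.1 ⊗ₖ N₂.A k.2)
        = ((N₁.A k.1)ᴴ * N₁.A k.1) ⊗ₖ ((N₂.A k.2)ᴴ * N₂.A k.2) := fun k => by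
      rw [kronecker_conjT, Matrix.mul_kronecker_mul]
    rw [Finset.sum_congr rfl fun k _ => h1 k,
      ← sum_kronecker_sum (fun k₁ => (N₁.A k₁)ᴴ * N₁.A k₁) (fun k₂ => (N₂.A k₂)ᴴ * N₂.A k₂),
      N₁.complete, N₂.complete, Matrix.one_kronecker_one]

/-- The minimum output entropy of a channel: the minimum of `H(N(|v⟩⟨v|))`
over unit vectors `v` in the input space. -/
def minOutEntropy {I O : Type} [Fintype I] [DecidableEq I] [Fintype O] [DecidableEq O]
    (N : QChannel I O) : ℝ :=
  sInf { x | ∃ v : I → ℂ, IsUnitVec v ∧ x = vNEntropy (N.app (outer v)) }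

/-- The Holevo capacity `χ_N` of a channel. -/
def holevoCap {I O : Type} [Fintype I] [DecidableEq I] [Fintype O] [DecidableEq O]
    (N : QChannel I O) : ℝ :=
  sSup { x | ∃ (n : ℕ) (p : Fin n → ℝ) (v : Fin n → I → ℂ),
    (∀ i, 0 ≤ p i) ∧ (∑ i, p i = 1) ∧ (∀ i, IsUnitVec (v i)) ∧
    x = vNEntropy (N.app (∑ i, (p i : ℂ) • outer (v i))) -
      ∑ i, p i * vNEntropy (N.app (outer (v i))) }

/-- The constrained Holevo capacity `χ_N(ρ)`: only ensembles averaging to `ρ` are allowed. -/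
def cHolevoCap {I O : Type} [Fintype I] [DecidableEq I] [Fintype O] [DecidableEq O]
    (N : QChannel I O) (ρ : Matrix I I ℂ) : ℝ :=
  sSup { x | ∃ (n : ℕ) (p : Fin n → ℝ) (v : Fin n → I → ℂ),
    (∀ i, 0 ≤ p i) ∧ (∑ i, p i = 1) ∧ (∀ i, IsUnitVec (v i)) ∧
    (∑ i, (p i : ℂ) • outer (v i)) = ρ ∧
    x = vNEntropy (N.app ρ) - ∑ i, p i * vNEntropy (N.app (outer (v i))) }

/-- Partial trace over the second (B) factor of a bipartite matrix. -/
def traceB {A B : Type} [Fintype B] (σ : Matrix (A × B) (A × B) ℂ) : Matrix A A ℂ :=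
  Matrix.of fun a a' => ∑ b, σ (a, b) (a', b)

/-- The entanglement of formation of a bipartite state on `A ⊗ B`. -/
def entF {A B : Type} [Fintype A] [DecidableEq A] [Fintype B] [DecidableEq B]
    (σ : Matrix (A × B) (A × B) ℂ) : ℝ :=
  sInf { x | ∃ (n : ℕ) (p : Fin n → ℝ) (v : Fin n → A × B → ℂ),
    (∀ i, 0 ≤ p i) ∧ (∀ i, IsUnitVec (v i)) ∧
    (∑ i, (p i : ℂ) • outer (v i)) = σ ∧
    x = ∑ i, p i * vNEntropy (traceB (outer (v i))) }

/-- The tensor product of two bipartite states `σ₁` on `A₁ ⊗ B₁` and `σ₂` on `A₂ ⊗ B₂`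
(Kronecker product), reindexed as a bipartite state with A-part `A₁ ⊗ A₂` and
B-part `B₁ ⊗ B₂`. -/
def pairTensor {A₁ B₁ A₂ B₂ : Type}
    (σ₁ : Matrix (A₁ × B₁) (A₁ × B₁) ℂ) (σ₂ : Matrix (A₂ × B₂) (A₂ × B₂) ℂ) :
    Matrix ((A₁ × A₂) × (B₁ × B₂)) ((A₁ × A₂) × (B₁ × B₂)) ℂ :=
  Matrix.of fun x y =>
    σ₁ (x.1.1, x.2.1) (y.1.1, y.2.1) * σ₂ (x.1.2, x.2.2) (y.1.2, y.2.2)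

/-- Trace out the second subsystem (`A₂` and `B₂`) of a quadripartite state. -/
def trace2 {A₁ A₂ B₁ B₂ : Type} [Fintype A₂] [Fintype B₂]
    (σ : Matrix ((A₁ × A₂) × (B₁ × B₂)) ((A₁ × A₂) × (B₁ × B₂)) ℂ) :
    Matrix (A₁ × B₁) (A₁ × B₁) ℂ :=
  Matrix.of fun x y => ∑ a₂, ∑ b₂, σ ((x.1, a₂), (x.2, b₂)) ((y.1, a₂), (y.2, b₂))

/-- Trace out the first subsystem (`A₁` and `B₁`) of a quadripartite state. -/
def trace1 {A₁ A₂ B₁ B₂ : Type} [Fintype A₁] [Fintype B₁]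
    (σ : Matrix ((A₁ × A₂) × (B₁ × B₂)) ((A₁ × A₂) × (B₁ × B₂)) ℂ) :
    Matrix (A₂ × B₂) (A₂ × B₂) ℂ :=
  Matrix.of fun x y => ∑ a₁, ∑ b₁, σ ((a₁, x.1), (b₁, x.2)) ((a₁, y.1), (b₁, y.2))

/-!
The constrained Holevo capacity is concave on density matrices: concatenating two ensembles
realises any mixture of their averages, the output entropy `H ∘ N` is concave (in the eigenbasis
of a mixture this is concavity of `x ↦ -x log x`, since the von Neumann entropy is at most the
Shannon entropy of the diagonal in any basis), and the average output entropy of the members is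
affine. A positive definite `ρ₀` lies in the algebraic interior of the density matrices relative to
the trace-zero Hermitian directions. There the one-sided directional derivative of a concave
function is finite and superlinear, so Hahn–Banach provides a linear functional above it, which
by concavity supports `χ_N` at `ρ₀`; the nondegenerate pairing `Re tr(τ X)` writes it as `τ`.
-/

open Matrix Pointwise

namespace ConcaveOn

variable {E : Type*} [AddCommGroup E] [Module ℝ E] {s : Set E} {f : E → ℝ} {x₀ : E}

/-- For concave `f`, the supremum of these slopes is the one-sided directional derivative
`f'(x₀; v)`. -/
def slopes (s : Set E) (f : E → ℝ) (x₀ v : E) : Set ℝ :=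
  {y | ∃ t : ℝ, 0 < t ∧ x₀ + t • v ∈ s ∧ y = (f (x₀ + t • v) - f x₀) / t}

/-- With `T = t₁ t₂ / (t₁ + t₂)`, the point `x₀ + T • (u + v)` is a convex combination of
`x₀ + t₁ • u` and `x₀ + t₂ • v`. -/
lemma slope_add_slope_le (hf : ConcaveOn ℝ s f) {u v : E} {t₁ t₂ : ℝ} (ht₁ : 0 < t₁)
    (ht₂ : 0 < t₂) (hu : x₀ + t₁ • u ∈ s) (hv : x₀ + t₂ • v ∈ s) :
    ∃ T : ℝ, 0 < T ∧ x₀ + T • (u + v) ∈ s ∧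
      (f (x₀ + t₁ • u) - f x₀) / t₁ + (f (x₀ + t₂ • v) - f x₀) / t₂ ≤
        (f (x₀ + T • (u + v)) - f x₀) / T := by
  have ht : 0 < t₁ + t₂ := add_pos ht₁ ht₂
  set a := t₂ / (t₁ + t₂)
  set b := t₁ / (t₁ + t₂)
  set T := t₁ * t₂ / (t₁ + t₂)
  have hab : a + b = 1 := by simp only [a, b]; field_simp; ring
  have hmix : a • (x₀ + t₁ • u) + b • (x₀ + t₂ • v) = x₀ + T • (u + v) := by
    have hT₁ : a * t₁ = T := by ring
    have hT₂ : b * t₂ = T := by ring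
    simp only [smul_add, smul_smul, hT₁, hT₂, ← add_assoc]
    rw [add_right_comm (a • x₀), ← add_smul, hab, one_smul]
  refine ⟨T, by positivity, hmix ▸ hf.1 hu hv (by positivity) (by positivity) hab, ?_⟩
  have hconc := hmix ▸ hf.2 hu hv (by positivity) (by positivity) hab
  rw [smul_eq_mul, smul_eq_mul] at hconc
  calc (f (x₀ + t₁ • u) - f x₀) / t₁ + (f (x₀ + t₂ • v) - f x₀) / t₂
      = (a * f (x₀ + t₁ • u) + b * f (x₀ + t₂ • v) - f x₀) / T := by
        simp only [a, b, T]
        field_simp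
        ring
    _ ≤ (f (x₀ + T • (u + v)) - f x₀) / T := by gcongr

lemma slopes_nonempty (hcore : ∀ v, ∃ t : ℝ, 0 < t ∧ x₀ + t • v ∈ s) (v : E) :
    (slopes s f x₀ v).Nonempty :=
  let ⟨t, ht, hts⟩ := hcore v
  ⟨_, t, ht, hts, rfl⟩

lemma slopes_bddAbove (hf : ConcaveOn ℝ s f) (hcore : ∀ v, ∃ t : ℝ, 0 < t ∧ x₀ + t • v ∈ s)
    (v : E) :
    BddAbove (slopes s f x₀ v) := by
  obtain ⟨t', ht', ht's⟩ := hcore (-v)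
  refine ⟨-((f (x₀ + t' • -v) - f x₀) / t'), ?_⟩
  rintro _ ⟨t, ht, hts, rfl⟩
  obtain ⟨T, -, -, hT⟩ := slope_add_slope_le hf ht ht' hts ht's
  rw [add_neg_cancel, smul_zero, add_zero, sub_self, zero_div] at hT
  linarith

lemma slopes_smul {c : ℝ} (hc : 0 < c) (v : E) :
    slopes s f x₀ (c • v) = c • slopes s f x₀ v := by
  ext y
  simp only [slopes, Set.mem_smul_set, smul_eq_mul]
  constructor
  · rintro ⟨t, ht, hts, rfl⟩
    rw [smul_smul] at hts ⊢
    exact ⟨_, ⟨t * c, by positivity, hts, rfl⟩, by field_simp⟩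
  · rintro ⟨_, ⟨t, ht, hts, rfl⟩, rfl⟩
    have htc : (t / c) • c • v = t • v := by rw [smul_smul, div_mul_cancel₀ t hc.ne']
    exact ⟨t / c, by positivity, htc ▸ hts, by rw [htc]; field_simp⟩

lemma sSup_slopes_add_le (hf : ConcaveOn ℝ s f) (hcore : ∀ v, ∃ t : ℝ, 0 < t ∧ x₀ + t • v ∈ s)
    (u v : E) :
    sSup (slopes s f x₀ u) + sSup (slopes s f x₀ v) ≤ sSup (slopes s f x₀ (u + v)) := by
  rw [← csSup_add (slopes_nonempty hcore u) (slopes_bddAbove hf hcore u)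
    (slopes_nonempty hcore v) (slopes_bddAbove hf hcore v)]
  refine csSup_le ((slopes_nonempty hcore u).add (slopes_nonempty hcore v)) ?_
  rintro _ ⟨_, ⟨t₁, ht₁, hu, rfl⟩, _, ⟨t₂, ht₂, hv, rfl⟩, rfl⟩
  obtain ⟨T, hT, hTs, hle⟩ := slope_add_slope_le hf ht₁ ht₂ hu hv
  exact hle.trans (le_csSup (slopes_bddAbove hf hcore _) ⟨T, hT, hTs, rfl⟩)

theorem exists_le_add_linearMap (hf : ConcaveOn ℝ s f)
    (hcore : ∀ v, ∃ t : ℝ, 0 < t ∧ x₀ + t • v ∈ s) :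
    ∃ g : E →ₗ[ℝ] ℝ, ∀ x ∈ s, f x ≤ f x₀ + g (x - x₀) := by
  -- Hahn–Banach below the sublinear map `v ↦ -f'(x₀; v)`.
  set p : E → ℝ := fun v => -sSup (slopes s f x₀ v)
  have p_hom : ∀ c : ℝ, 0 < c → ∀ v, p (c • v) = c * p v := fun c hc v => by
    simp only [p, slopes_smul hc, Real.sSup_smul_of_nonneg hc.le, smul_eq_mul, mul_neg]
  have p_add : ∀ u v, p (u + v) ≤ p u + p v := fun u v => by
    simp only [p]
    linarith [sSup_slopes_add_le hf hcore u v]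
  have p_zero : p 0 = 0 := by
    have := p_hom 2 two_pos 0
    rw [smul_zero] at this
    linarith
  obtain ⟨g, -, hg⟩ := exists_extension_of_le_sublinear ((0 : E →ₗ[ℝ] ℝ).toPMap ⊥) p p_hom
    p_add fun v => by
      change (0 : E →ₗ[ℝ] ℝ) v ≤ p v
      simp [(Submodule.mem_bot ℝ).1 v.2, p_zero]
  refine ⟨-g, fun x hx => ?_⟩
  have hx' : f x - f x₀ ∈ slopes s f x₀ (x - x₀) :=
    ⟨1, one_pos, by simpa using hx, by simp⟩
  have := le_csSup (slopes_bddAbove hf hcore _) hx'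
  have := hg (x - x₀)
  simp only [LinearMap.neg_apply, p] at this ⊢
  linarith

theorem exists_le_add_linearMap_of_submodule (hf : ConcaveOn ℝ s f) (V : Submodule ℝ E)
    (hsV : ∀ x ∈ s, x - x₀ ∈ V) (hcore : ∀ v ∈ V, ∃ t : ℝ, 0 < t ∧ x₀ + t • v ∈ s) :
    ∃ g : E →ₗ[ℝ] ℝ, ∀ x ∈ s, f x ≤ f x₀ + g (x - x₀) := by
  set φ : V →ᵃ[ℝ] E := (AffineEquiv.constVAdd ℝ E x₀).toAffineMap.comp V.subtype.toAffineMap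
  have hφ : ∀ v, φ v = x₀ + v := fun v => rfl
  obtain ⟨g, hg⟩ := (hf.comp_affineMap φ).exists_le_add_linearMap (x₀ := 0) fun v => by
    obtain ⟨t, ht, hts⟩ := hcore v v.2
    exact ⟨t, ht, by simpa [hφ] using hts⟩
  obtain ⟨G, rfl⟩ := LinearMap.exists_extend g
  refine ⟨G, fun x hx => ?_⟩
  simpa [hφ] using hg ⟨x - x₀, hsV x hx⟩ (by simpa [hφ] using hx)

end ConcaveOn

namespace Matrix

variable {n : Type*} [Fintype n]

def reTraceForm (n : Type*) [Fintype n] : LinearMap.BilinForm ℝ (Matrix n n ℂ) :=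
  LinearMap.mk₂ ℝ (fun τ X => (τ * X).trace.re)
    (fun _ _ _ => by simp [add_mul, trace_add]) (fun _ _ _ => by simp [trace_smul])
    (fun _ _ _ => by simp [mul_add, trace_add]) (fun _ _ _ => by simp [trace_smul])

lemma reTraceForm_nondegenerate : (reTraceForm n).Nondegenerate := by
  have h_eq_zero (τ : Matrix n n ℂ) (h : (τ * τᴴ).trace.re = 0) : τ = 0 :=
    have hnn := Complex.nonneg_iff.1 (posSemidef_self_mul_conjTranspose τ).trace_nonneg
    trace_mul_conjTranspose_self_eq_zero_iff.1 (Complex.ext h hnn.2.symm)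
  refine ⟨fun τ h => h_eq_zero τ (h τᴴ), fun τ h => h_eq_zero τ ?_⟩
  rw [trace_mul_comm]
  exact h τᴴ

lemma re_trace_conjTranspose_mul {σ X : Matrix n n ℂ} (hX : X.IsHermitian) :
    (σᴴ * X).trace.re = (σ * X).trace.re := by
  rw [← hX, ← conjTranspose_mul, trace_conjTranspose, hX, trace_mul_comm]
  rfl

lemma exists_isHermitian_re_trace_mul_eq (g : Matrix n n ℂ →ₗ[ℝ] ℝ) :
    ∃ τ : Matrix n n ℂ, τ.IsHermitian ∧ ∀ X : Matrix n n ℂ, X.IsHermitian →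
      (τ * X).trace.re = g X := by
  set σ := ((reTraceForm n).toDual reTraceForm_nondegenerate).symm g
  have hσ (X : Matrix n n ℂ) : (σ * X).trace.re = g X :=
    LinearMap.BilinForm.apply_toDual_symm_apply (hB := reTraceForm_nondegenerate) g X
  refine ⟨(2⁻¹ : ℝ) • (σ + σᴴ), ?_, fun X hX => ?_⟩
  · simp [IsHermitian, add_comm]
  · rw [smul_mul, add_mul, trace_smul, trace_add, Complex.smul_re, Complex.add_re,
      re_trace_conjTranspose_mul hX, hσ, smul_eq_mul]
    ring

end Matrix

open scoped MatrixOrder in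
lemma Matrix.PosDef.exists_posSemidef_add_smul {n : Type*} [Fintype n] [DecidableEq n]
    {A B : Matrix n n ℂ} (hA : A.PosDef) (hB : B.IsHermitian) :
    ∃ t : ℝ, 0 < t ∧ (A + t • B).PosSemidef := by
  cases isEmpty_or_nonempty n with
  | inl _ => exact ⟨1, one_pos, Subsingleton.elim A (A + (1 : ℝ) • B) ▸ hA.posSemidef⟩
  | inr _ =>
    obtain ⟨r, hr, hrA⟩ := (CFC.exists_pos_algebraMap_le_iff hA.isHermitian.isSelfAdjoint).2
      fun x hx => hA.isStrictlyPositive.spectrum_pos hx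
    obtain ⟨c, hc⟩ := (Set.finite_range hB.eigenvalues).bddBelow
    have hcB : algebraMap ℝ _ c ≤ B := algebraMap_le_of_le_spectrum
      (fun x hx => hc (hB.spectrum_real_eq_range_eigenvalues ▸ hx)) hB.isSelfAdjoint
    rw [Matrix.le_iff, Algebra.algebraMap_eq_smul_one] at hrA hcB
    set t := r / (|c| + 1)
    have ht : 0 < t := by positivity
    have hrtc : 0 ≤ r + t * c := by
      have : t * |c| ≤ r := by
        rw [div_mul_eq_mul_div, div_le_iff₀ (by positivity)]
        nlinarith
      nlinarith [neg_abs_le c]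
    have hsplit : A + t • B = (A - r • 1) + t • (B - c • 1) + (r + t * c) • 1 := by module
    exact ⟨t, ht, hsplit ▸ (hrA.add (hcB.smul ht.le)).add (PosSemidef.one.smul hrtc)⟩

lemma convex_setOf_posSemidef {n : Type*} : Convex ℝ {ρ : Matrix n n ℂ | ρ.PosSemidef} :=
  fun _ h₁ _ h₂ _ _ ha hb _ => (h₁.smul ha).add (h₂.smul hb)

section Entropy

variable {n : Type} [Fintype n] [DecidableEq n]

lemma vNEntropy_eq_sum_negMulLog {ρ : Matrix n n ℂ} (h : ρ.IsHermitian) :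
    vNEntropy ρ = ∑ i, Real.negMulLog (h.eigenvalues i) := by
  simp [vNEntropy, h, Real.negMulLog]

lemma vNEntropy_nonneg {ρ : Matrix n n ℂ} (hρ : IsDensityMatrix ρ) : 0 ≤ vNEntropy ρ := by
  have hsum : ∑ i, hρ.1.isHermitian.eigenvalues i = 1 := by
    simpa using congrArg Complex.re (hρ.1.isHermitian.trace_eq_sum_eigenvalues.symm.trans hρ.2)
  rw [vNEntropy_eq_sum_negMulLog hρ.1.isHermitian]
  refine Finset.sum_nonneg fun i _ => Real.negMulLog_nonneg (hρ.1.eigenvalues_nonneg i) ?_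
  exact hsum ▸ Finset.single_le_sum (fun j _ => hρ.1.eigenvalues_nonneg j) (Finset.mem_univ i)

lemma unitaryGroup_sum_norm_sq_row (W : unitaryGroup n ℂ) (k : n) :
    ∑ j, ‖(W : Matrix n n ℂ) k j‖ ^ 2 = 1 := by
  have h := congr_fun₂ (Unitary.coe_mul_star_self W) k k
  simp only [mul_apply, Unitary.coe_star, star_apply, RCLike.star_def, Complex.mul_conj',
    one_apply_eq] at h
  exact_mod_cast h

lemma unitaryGroup_sum_norm_sq_col (W : unitaryGroup n ℂ) (j : n) :
    ∑ k, ‖(W : Matrix n n ℂ) k j‖ ^ 2 = 1 := by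
  simpa [star_apply] using unitaryGroup_sum_norm_sq_row (star W) j

lemma re_star_mul_diagonal_mul_apply_self (M : Matrix n n ℂ) (d : n → ℝ) (j : n) :
    ((star M * diagonal (RCLike.ofReal ∘ d) * M : Matrix n n ℂ) j j).re =
      ∑ k, ‖M k j‖ ^ 2 * d k := by
  simp only [mul_apply, star_apply, Complex.re_sum]
  refine Finset.sum_congr rfl fun k _ => ?_
  rw [Finset.sum_eq_single k (fun l _ hl => by simp [diagonal_apply_ne _ hl]) (by simp),
    diagonal_apply_eq, mul_right_comm, RCLike.star_def, mul_comm (starRingEnd ℂ _),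
    Complex.mul_conj']
  simp [← Complex.ofReal_pow]

lemma vNEntropy_le_sum_negMulLog_diag {σ : Matrix n n ℂ} (hσ : σ.PosSemidef)
    (W : unitaryGroup n ℂ) :
    vNEntropy σ ≤
      ∑ j, Real.negMulLog ((star (W : Matrix n n ℂ) * σ * (W : Matrix n n ℂ)) j j).re := by
  set U := hσ.isHermitian.eigenvectorUnitary
  set e := hσ.isHermitian.eigenvalues
  set M : unitaryGroup n ℂ := star U * W
  have hconj : star (W : Matrix n n ℂ) * σ * (W : Matrix n n ℂ)
      = star (M : Matrix n n ℂ) * diagonal (RCLike.ofReal ∘ e) * (M : Matrix n n ℂ) := by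
    conv_lhs => rw [hσ.isHermitian.spectral_theorem, Unitary.conjStarAlgAut_apply]
    simp only [M, Submonoid.coe_mul, star_mul, Unitary.coe_star, star_star, Matrix.mul_assoc]
    rfl
  -- `‖M k j‖ ^ 2` is doubly stochastic, so this is Jensen's inequality for `negMulLog`.
  have hjensen (j : n) : ∑ k, ‖(M : Matrix n n ℂ) k j‖ ^ 2 * Real.negMulLog (e k) ≤
      Real.negMulLog (∑ k, ‖(M : Matrix n n ℂ) k j‖ ^ 2 * e k) := by
    simpa using Real.concaveOn_negMulLog.le_map_sum (fun k _ => by positivity)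
      (unitaryGroup_sum_norm_sq_col M j) (fun k _ => hσ.eigenvalues_nonneg k)
  calc vNEntropy σ
      = ∑ j, ∑ k, ‖(M : Matrix n n ℂ) k j‖ ^ 2 * Real.negMulLog (e k) := by
        rw [vNEntropy_eq_sum_negMulLog hσ.isHermitian, Finset.sum_comm]
        simp only [← Finset.sum_mul, unitaryGroup_sum_norm_sq_row, one_mul, e]
    _ ≤ _ := by
        gcongr with j
        rw [hconj, re_star_mul_diagonal_mul_apply_self]
        exact hjensen j

lemma vNEntropy_eq_sum_negMulLog_diag {A : Matrix n n ℂ} (hA : A.IsHermitian) :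
    vNEntropy A = ∑ j, Real.negMulLog ((star (hA.eigenvectorUnitary : Matrix n n ℂ) * A *
      (hA.eigenvectorUnitary : Matrix n n ℂ)) j j).re := by
  have h := hA.conjStarAlgAut_star_eigenvectorUnitary
  rw [Unitary.conjStarAlgAut_star_apply] at h
  simp [vNEntropy_eq_sum_negMulLog hA, h]

theorem concaveOn_vNEntropy : ConcaveOn ℝ {ρ : Matrix n n ℂ | ρ.PosSemidef} vNEntropy := by
  refine ⟨convex_setOf_posSemidef, fun ρ₁ h₁ ρ₂ h₂ a b ha hb hab => ?_⟩
  have hA : (a • ρ₁ + b • ρ₂).IsHermitian :=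
    (convex_setOf_posSemidef h₁ h₂ ha hb hab).isHermitian
  set U := hA.eigenvectorUnitary
  set d : Matrix n n ℂ → n → ℝ := fun ρ j => ((star (U : Matrix n n ℂ) * ρ * U) j j).re
  have hd_nonneg {ρ : Matrix n n ℂ} (hρ : ρ.PosSemidef) (j : n) : 0 ≤ d ρ j :=
    (Complex.nonneg_iff.1 (hρ.conjTranspose_mul_mul_same (U : Matrix n n ℂ)).diag_nonneg).1
  have hd_mix (j : n) : d (a • ρ₁ + b • ρ₂) j = a * d ρ₁ j + b * d ρ₂ j := by
    simp [d, Matrix.mul_add, Matrix.add_mul]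
  calc a • vNEntropy ρ₁ + b • vNEntropy ρ₂
      ≤ a * ∑ j, Real.negMulLog (d ρ₁ j) + b * ∑ j, Real.negMulLog (d ρ₂ j) := by
        rw [smul_eq_mul, smul_eq_mul]
        gcongr
        exacts [vNEntropy_le_sum_negMulLog_diag h₁ U, vNEntropy_le_sum_negMulLog_diag h₂ U]
    _ = ∑ j, (a • Real.negMulLog (d ρ₁ j) + b • Real.negMulLog (d ρ₂ j)) := by
        simp [Finset.sum_add_distrib, Finset.mul_sum]
    _ ≤ ∑ j, Real.negMulLog (a • d ρ₁ j + b • d ρ₂ j) := Finset.sum_le_sum fun j _ =>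
        Real.concaveOn_negMulLog.2 (hd_nonneg h₁ j) (hd_nonneg h₂ j) ha hb hab
    _ = vNEntropy (a • ρ₁ + b • ρ₂) := by
        simp [vNEntropy_eq_sum_negMulLog_diag hA, ← hd_mix, d, U]

end Entropy

section Channel

variable {I O : Type} [Fintype I] [DecidableEq I] [Fintype O] [DecidableEq O] (N : QChannel I O)

lemma QChannel.app_add (ρ σ : Matrix I I ℂ) : N.app (ρ + σ) = N.app ρ + N.app σ := by
  simp only [QChannel.app, Matrix.mul_add, Matrix.add_mul, Finset.sum_add_distrib]

lemma QChannel.app_smul (c : ℝ) (ρ : Matrix I I ℂ) : N.app (c • ρ) = c • N.app ρ := by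
  simp only [QChannel.app, Matrix.mul_smul, Matrix.smul_mul, Finset.smul_sum]

lemma QChannel.app_posSemidef {ρ : Matrix I I ℂ} (hρ : ρ.PosSemidef) : (N.app ρ).PosSemidef :=
  Finset.sum_induction _ Matrix.PosSemidef (fun _ _ => .add) .zero
    fun k _ => hρ.mul_mul_conjTranspose_same (N.A k)

lemma QChannel.trace_app (ρ : Matrix I I ℂ) : (N.app ρ).trace = ρ.trace := by
  calc (N.app ρ).trace = ∑ k, ((N.A k)ᴴ * N.A k * ρ).trace := by
        simp only [QChannel.app, trace_sum, trace_mul_cycle _ ρ]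
    _ = ρ.trace := by rw [← trace_sum, ← Finset.sum_mul, N.complete, Matrix.one_mul]

lemma QChannel.isDensityMatrix_app {ρ : Matrix I I ℂ} (hρ : IsDensityMatrix ρ) :
    IsDensityMatrix (N.app ρ) :=
  ⟨N.app_posSemidef hρ.1, (N.trace_app ρ).trans hρ.2⟩

end Channel

section Ensemble

variable {I : Type} [Fintype I]

lemma isDensityMatrix_outer [DecidableEq I] {v : I → ℂ} (hv : IsUnitVec v) :
    IsDensityMatrix (outer v) := by
  refine ⟨posSemidef_vecMulVec_self_star v, ?_⟩
  simp only [outer, trace_vecMulVec, dotProduct, Pi.star_apply, RCLike.star_def,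
    Complex.mul_conj']
  exact_mod_cast hv

lemma convex_setOf_isDensityMatrix [DecidableEq I] :
    Convex ℝ {ρ : Matrix I I ℂ | IsDensityMatrix ρ} :=
  fun _ h₁ _ h₂ a b ha hb hab => ⟨convex_setOf_posSemidef h₁.1 h₂.1 ha hb hab, by
    simp only [trace_add, trace_smul, h₁.2, h₂.2, Complex.real_smul, mul_one]
    exact_mod_cast hab⟩

def IsEnsemble {m : ℕ} (p : Fin m → ℝ) (v : Fin m → I → ℂ) (ρ : Matrix I I ℂ) : Prop :=
  (∀ i, 0 ≤ p i) ∧ ∑ i, p i = 1 ∧ (∀ i, IsUnitVec (v i)) ∧ ∑ i, (p i : ℂ) • outer (v i) = ρ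

lemma exists_isEnsemble [DecidableEq I] {ρ : Matrix I I ℂ} (hρ : IsDensityMatrix ρ) :
    ∃ (m : ℕ) (p : Fin m → ℝ) (v : Fin m → I → ℂ), IsEnsemble p v ρ := by
  have hspec := hρ.1.isHermitian.spectral_theorem
  rw [Unitary.conjStarAlgAut_apply] at hspec
  set e := (Fintype.equivFin I).symm
  set U : Matrix I I ℂ := (hρ.1.isHermitian.eigenvectorUnitary : Matrix I I ℂ)
  set w := hρ.1.isHermitian.eigenvalues
  refine ⟨_, w ∘ e, fun i a => U a (e i), fun i => hρ.1.eigenvalues_nonneg _, ?_, fun i => ?_, ?_⟩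
  · simpa [e.sum_comp w] using
      congrArg Complex.re (hρ.1.isHermitian.trace_eq_sum_eigenvalues.symm.trans hρ.2)
  · exact unitaryGroup_sum_norm_sq_col hρ.1.isHermitian.eigenvectorUnitary _
  · conv_rhs => rw [hspec]
    ext a b
    rw [mul_apply]
    simp only [Function.comp_apply, Matrix.sum_apply, Matrix.smul_apply, outer, vecMulVec_apply,
      Pi.star_apply, smul_eq_mul, mul_diagonal, star_apply]
    rw [e.sum_comp fun k => (w k : ℂ) * (U a k * star (U b k))]
    refine Finset.sum_congr rfl fun k _ => ?_
    simp only [U, w, RCLike.ofReal_eq_complex_ofReal]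
    ring

lemma IsEnsemble.append {m₁ m₂ : ℕ} {p₁ : Fin m₁ → ℝ} {p₂ : Fin m₂ → ℝ}
    {v₁ : Fin m₁ → I → ℂ} {v₂ : Fin m₂ → I → ℂ} {ρ₁ ρ₂ : Matrix I I ℂ}
    (h₁ : IsEnsemble p₁ v₁ ρ₁) (h₂ : IsEnsemble p₂ v₂ ρ₂) {a b : ℝ} (ha : 0 ≤ a) (hb : 0 ≤ b)
    (hab : a + b = 1) :
    IsEnsemble (Fin.append (a • p₁) (b • p₂)) (Fin.append v₁ v₂) (a • ρ₁ + b • ρ₂) := by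
  obtain ⟨hp₁, hs₁, hu₁, hρ₁⟩ := h₁
  obtain ⟨hp₂, hs₂, hu₂, hρ₂⟩ := h₂
  refine ⟨fun i => ?_, ?_, fun i => ?_, ?_⟩
  · induction i using Fin.addCases <;> simp [mul_nonneg, *]
  · simp [Fin.sum_univ_add, ← Finset.mul_sum, hs₁, hs₂, hab]
  · induction i using Fin.addCases <;> simp [*]
  · simp [Fin.sum_univ_add, ← hρ₁, ← hρ₂, Finset.smul_sum, mul_smul, Complex.coe_smul]

end Ensemble

section Holevo

variable {I O : Type} [Fintype I] [DecidableEq I] [Fintype O] [DecidableEq O] (N : QChannel I O)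

def holevoSet (ρ : Matrix I I ℂ) : Set ℝ :=
  {x | ∃ (m : ℕ) (p : Fin m → ℝ) (v : Fin m → I → ℂ), IsEnsemble p v ρ ∧
    x = vNEntropy (N.app ρ) - ∑ i, p i * vNEntropy (N.app (outer (v i)))}

lemma cHolevoCap_eq_sSup_holevoSet (ρ : Matrix I I ℂ) :
    cHolevoCap N ρ = sSup (holevoSet N ρ) := by
  simp only [cHolevoCap, holevoSet, IsEnsemble, and_assoc]

lemma holevoSet_nonempty {ρ : Matrix I I ℂ} (hρ : IsDensityMatrix ρ) :
    (holevoSet N ρ).Nonempty :=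
  let ⟨m, p, v, h⟩ := exists_isEnsemble hρ
  ⟨_, m, p, v, h, rfl⟩

lemma holevoSet_bddAbove (ρ : Matrix I I ℂ) : BddAbove (holevoSet N ρ) := by
  refine ⟨vNEntropy (N.app ρ), ?_⟩
  rintro _ ⟨m, p, v, ⟨hp, -, hv, -⟩, rfl⟩
  have : 0 ≤ ∑ i, p i * vNEntropy (N.app (outer (v i))) := Finset.sum_nonneg fun i _ =>
    mul_nonneg (hp i) (vNEntropy_nonneg (N.isDensityMatrix_app (isDensityMatrix_outer (hv i))))
  linarith

/-- Concatenate the two ensembles: the output entropy of the average is concave, while the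
average output entropy of the members is affine. -/
lemma exists_mem_holevoSet_smul_add_smul {ρ₁ ρ₂ : Matrix I I ℂ} (h₁ : ρ₁.PosSemidef)
    (h₂ : ρ₂.PosSemidef) {x₁ x₂ : ℝ} (hx₁ : x₁ ∈ holevoSet N ρ₁) (hx₂ : x₂ ∈ holevoSet N ρ₂)
    {a b : ℝ} (ha : 0 ≤ a) (hb : 0 ≤ b) (hab : a + b = 1) :
    ∃ x ∈ holevoSet N (a • ρ₁ + b • ρ₂), a * x₁ + b * x₂ ≤ x := by
  obtain ⟨m₁, p₁, v₁, hens₁, rfl⟩ := hx₁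
  obtain ⟨m₂, p₂, v₂, hens₂, rfl⟩ := hx₂
  refine ⟨_, ⟨_, _, _, hens₁.append hens₂ ha hb hab, rfl⟩, ?_⟩
  have hH : a * vNEntropy (N.app ρ₁) + b * vNEntropy (N.app ρ₂) ≤
      vNEntropy (N.app (a • ρ₁ + b • ρ₂)) := by
    rw [N.app_add, N.app_smul, N.app_smul]
    exact concaveOn_vNEntropy.2 (N.app_posSemidef h₁) (N.app_posSemidef h₂) ha hb hab
  simp only [Fin.sum_univ_add, Fin.append_left, Fin.append_right, Pi.smul_apply, smul_eq_mul,
    mul_assoc, ← Finset.mul_sum]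
  linarith

theorem concaveOn_cHolevoCap :
    ConcaveOn ℝ {ρ : Matrix I I ℂ | IsDensityMatrix ρ} (cHolevoCap N) := by
  refine ⟨convex_setOf_isDensityMatrix, fun ρ₁ h₁ ρ₂ h₂ a b ha hb hab => ?_⟩
  simp only [cHolevoCap_eq_sSup_holevoSet]
  rw [← Real.sSup_smul_of_nonneg ha, ← Real.sSup_smul_of_nonneg hb,
    ← csSup_add ((holevoSet_nonempty N h₁).smul_set) ((holevoSet_bddAbove N _).smul_of_nonneg ha)
      ((holevoSet_nonempty N h₂).smul_set) ((holevoSet_bddAbove N _).smul_of_nonneg hb)]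
  refine csSup_le ((holevoSet_nonempty N h₁).smul_set.add (holevoSet_nonempty N h₂).smul_set) ?_
  rintro _ ⟨_, ⟨x₁, hx₁, rfl⟩, _, ⟨x₂, hx₂, rfl⟩, rfl⟩
  obtain ⟨x, hx, hle⟩ := exists_mem_holevoSet_smul_add_smul N h₁.1 h₂.1 hx₁ hx₂ ha hb hab
  exact hle.trans (le_csSup (holevoSet_bddAbove N _) hx)

end Holevo

def traceZeroHermitian (n : Type*) [Fintype n] : Submodule ℝ (Matrix n n ℂ) where
  carrier := {X | X.IsHermitian ∧ X.trace = 0}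
  add_mem' hX hY := ⟨hX.1.add hY.1, by rw [trace_add, hX.2, hY.2, add_zero]⟩
  zero_mem' := ⟨isHermitian_zero, trace_zero _ _⟩
  smul_mem' c X hX := ⟨by simp [IsHermitian, hX.1.eq], by rw [trace_smul, hX.2, smul_zero]⟩

/-- Existence of a supporting linear functional for the concave function `χ_N` at an
interior (positive definite) point `ρ₀`. -/
theorem cHolevoCap_supporting_functional {dI dO : ℕ} (N : QChannel (Fin dI) (Fin dO))
    (ρ₀ : Matrix (Fin dI) (Fin dI) ℂ) (hρ₀ : ρ₀.PosDef) (hρ₀tr : ρ₀.trace = 1) :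
    ∃ τ : Matrix (Fin dI) (Fin dI) ℂ, τ.IsHermitian ∧
      ∀ ρ : Matrix (Fin dI) (Fin dI) ℂ, IsDensityMatrix ρ →
        cHolevoCap N ρ ≤ cHolevoCap N ρ₀ + ((τ * (ρ - ρ₀)).trace).re := by
  obtain ⟨g, hg⟩ := (concaveOn_cHolevoCap N).exists_le_add_linearMap_of_submodule
    (x₀ := ρ₀) (traceZeroHermitian _)
    (fun ρ hρ => ⟨hρ.1.isHermitian.sub hρ₀.isHermitian, by rw [trace_sub, hρ.2, hρ₀tr, sub_self]⟩)
    fun δ hδ => by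
      obtain ⟨t, ht, hpsd⟩ := hρ₀.exists_posSemidef_add_smul hδ.1
      exact ⟨t, ht, hpsd, by rw [trace_add, trace_smul, hδ.2, smul_zero, add_zero, hρ₀tr]⟩
  obtain ⟨τ, hτ, hτg⟩ := exists_isHermitian_re_trace_mul_eq g
  exact ⟨τ, hτ, fun ρ hρ => (hg ρ hρ).trans_eq <| by
    rw [hτg _ (hρ.1.isHermitian.sub hρ₀.isHermitian)]⟩

end
end

section
/- Linear programming dual formulation of the constrained Holevo capacity: for every quantum channel N and every positive definite density matrix ρ on its input space, there exists a Hermitian matrix τ on the input space such that ⟨v|τ|v⟩ ≤ H(N(|v⟩⟨v|)) for every unit vector v in the input space, and χ_N(ρ) = H(N(ρ)) − Tr(τρ). -/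
open scoped Kronecker Matrix ComplexOrder

noncomputable section

/-!
`χ_N(ρ) = H(N(ρ)) - F(ρ)`, where `F` is the convex roof of `v ↦ H(N(|v⟩⟨v|))`: the infimum of
`∑ pᵢ H(N(|vᵢ⟩⟨vᵢ|))` over the decompositions `ρ = ∑ pᵢ |vᵢ⟩⟨vᵢ|`. `F` is convex on the positive
semidefinite cone and bounded there by `Tr σ · dim`, and a positive definite `ρ` is an interior
point of the cone (once matrices are replaced by their Hermitian parts, so that the cone has
interior among all matrices). Hence `F` has a supporting hyperplane `σ ↦ F(ρ) + Re Tr(τ(σ - ρ))`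
at `ρ`, with `τ` Hermitian. Shifting `τ` by `(F(ρ) - Re Tr(τρ)) • 1` gives
`⟨v|τ|v⟩ ≤ F(|v⟩⟨v|) ≤ H(N(|v⟩⟨v|))` and `Re Tr(τρ) = F(ρ)`.
-/

open Matrix Filter Topology

/-- A supporting hyperplane to the epigraph at `(x, f x)`; it is not vertical because the bound
puts `(x, M + 1)` in the interior of the epigraph. -/
theorem ConvexOn.exists_subgradient {E : Type*} [AddCommGroup E] [Module ℝ E]
    [TopologicalSpace E] [IsTopologicalAddGroup E] [ContinuousSMul ℝ E]
    {s : Set E} {f : E → ℝ} (hf : ConvexOn ℝ s f) {x : E} (hx : x ∈ interior s) {M : ℝ}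
    (hM : ∀ᶠ y in 𝓝 x, f y ≤ M) :
    ∃ g : StrongDual ℝ E, ∀ y ∈ s, f x + g (y - x) ≤ f y := by
  set A := {p : E × ℝ | p.1 ∈ s ∧ f p.1 ≤ p.2}
  have hA : Convex ℝ A := hf.convex_epigraph
  have hint : (x, M + 1) ∈ interior A := by
    refine mem_interior_iff_mem_nhds.mpr (mem_of_superset (prod_mem_nhds
      (inter_mem (mem_interior_iff_mem_nhds.mp hx) hM) (Ioi_mem_nhds (lt_add_one M))) ?_)
    rintro ⟨y, t⟩ ⟨⟨hy, hfy⟩, ht⟩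
    exact ⟨hy, hfy.trans ht.le⟩
  have hbdry : (x, f x) ∉ interior A := fun h => by
    have hnhds : ∀ᶠ t in 𝓝 (f x), (x, t) ∈ A :=
      (continuous_const.prodMk continuous_id).continuousAt.preimage_mem_nhds
        (mem_interior_iff_mem_nhds.mp h)
    obtain ⟨t, ht, -, hft⟩ := hnhds.exists_lt
    exact (hft.trans_lt ht).false
  obtain ⟨φ, hφ⟩ := geometric_hahn_banach_open_point hA.interior isOpen_interior hbdry
  have hle : ∀ p ∈ A, φ p ≤ φ (x, f x) := by
    refine fun p hp => closure_minimal (fun q hq => (hφ q hq).le)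
      (isClosed_le φ.continuous continuous_const) ?_
    rw [hA.closure_interior_eq_closure_of_nonempty_interior ⟨_, hint⟩]
    exact subset_closure hp
  have hsplit : ∀ y t, φ (y, t) = φ (y, 0) + t * φ (0, 1) := fun y t => by
    rw [← smul_eq_mul, ← map_smul, ← map_add, Prod.smul_mk, Prod.mk_add_mk]
    simp
  have hβ : φ (0, 1) < 0 := by
    have h := hφ _ hint
    rw [hsplit x, hsplit x (f x)] at h
    nlinarith [hM.self_of_nhds]
  refine ⟨(-φ (0, 1))⁻¹ • φ.comp (.inl ℝ E ℝ), fun y hy => ?_⟩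
  have h := hle (y, f y) ⟨hy, le_rfl⟩
  rw [hsplit y, hsplit x] at h
  have hg : ((-φ (0, 1))⁻¹ • φ.comp (.inl ℝ E ℝ)) (y - x)
      = (-φ (0, 1))⁻¹ * (φ (y, 0) - φ (x, 0)) := by
    simp [← map_sub]
  rw [hg, ← le_sub_iff_add_le', inv_mul_le_iff₀ (neg_pos.mpr hβ)]
  linarith

section Outer

variable {n : Type} [Fintype n]

lemma isUnitVec_iff_dotProduct {v : n → ℂ} : IsUnitVec v ↔ star v ⬝ᵥ v = 1 := by
  simp only [IsUnitVec, dotProduct, Pi.star_apply, Complex.star_def, Complex.conj_mul']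
  norm_cast

lemma trace_outer {v : n → ℂ} (hv : IsUnitVec v) : (outer v).trace = 1 := by
  rw [outer, trace_vecMulVec, dotProduct_comm, isUnitVec_iff_dotProduct.mp hv]

lemma trace_mul_outer (A : Matrix n n ℂ) (v : n → ℂ) :
    (A * outer v).trace = star v ⬝ᵥ A *ᵥ v := by
  rw [outer, mul_vecMulVec, trace_vecMulVec, dotProduct_comm]

lemma posSemidef_outer (v : n → ℂ) : (outer v).PosSemidef :=
  posSemidef_vecMulVec_self_star v

lemma Matrix.IsHermitian.eq_sum_eigenvalues_smul_outer [DecidableEq n]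
    {A : Matrix n n ℂ} (hA : A.IsHermitian) :
    A = ∑ i, (hA.eigenvalues i : ℂ) • outer ⇑(hA.eigenvectorBasis i) := by
  conv_lhs => rw [hA.spectral_theorem, Unitary.conjStarAlgAut_apply]
  ext a b
  simp [mul_apply, outer, Matrix.sum_apply, diagonal_apply, vecMulVec_apply]
  exact Finset.sum_congr rfl fun j _ => by ring

lemma Matrix.IsHermitian.isUnitVec_eigenvectorBasis [DecidableEq n] {A : Matrix n n ℂ}
    (hA : A.IsHermitian) (i : n) : IsUnitVec ⇑(hA.eigenvectorBasis i) := by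
  rw [IsUnitVec, ← EuclideanSpace.norm_sq_eq, hA.eigenvectorBasis.orthonormal.norm_eq_one]
  norm_num

end Outer

namespace Matrix

variable {n : Type}

def hermPart : Matrix n n ℂ →ₗ[ℝ] Matrix n n ℂ where
  toFun σ := (2⁻¹ : ℝ) • (σ + σᴴ)
  map_add' σ τ := by rw [conjTranspose_add, add_add_add_comm, smul_add]
  map_smul' r σ := by
    rw [conjTranspose_smul, star_trivial, ← smul_add, smul_comm, RingHom.id_apply]

lemma hermPart_apply (σ : Matrix n n ℂ) : hermPart σ = (2⁻¹ : ℝ) • (σ + σᴴ) := rfl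

lemma isHermitian_hermPart (σ : Matrix n n ℂ) : (hermPart σ).IsHermitian := by
  rw [IsHermitian, hermPart_apply, conjTranspose_smul, star_trivial, conjTranspose_add,
    conjTranspose_conjTranspose, add_comm]

lemma IsHermitian.hermPart_eq {σ : Matrix n n ℂ} (hσ : σ.IsHermitian) : hermPart σ = σ := by
  rw [hermPart_apply, hσ.eq, ← two_smul ℝ σ, smul_smul, inv_mul_cancel₀ two_ne_zero, one_smul]

lemma dotProduct_hermPart_mulVec [Fintype n] (σ : Matrix n n ℂ) (x : n → ℂ) :
    star x ⬝ᵥ hermPart σ *ᵥ x = ((star x ⬝ᵥ σ *ᵥ x).re : ℂ) := by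
  have hconj : star x ⬝ᵥ σᴴ *ᵥ x = star (star x ⬝ᵥ σ *ᵥ x) := by
    rw [star_dotProduct, star_mulVec, ← dotProduct_mulVec, conjTranspose_conjTranspose]
  rw [hermPart_apply, smul_mulVec, add_mulVec, dotProduct_smul, dotProduct_add, hconj,
    Complex.star_def, Complex.add_conj, Complex.real_smul]
  push_cast
  ring

lemma re_trace_hermPart [Fintype n] (σ : Matrix n n ℂ) : (hermPart σ).trace.re = σ.trace.re := by
  simp [hermPart_apply, trace_conjTranspose]
  ring

/-- Positivity of `u* σ u` on the compact unit sphere persists near a positive definite `ρ`. -/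
lemma PosDef.eventually_posSemidef_hermPart [Fintype n] {ρ : Matrix n n ℂ} (hρ : ρ.PosDef) :
    ∀ᶠ σ in 𝓝 ρ, (hermPart σ).PosSemidef := by
  have hcont : Continuous fun p : Matrix n n ℂ × (n → ℂ) => (star p.2 ⬝ᵥ p.1 *ᵥ p.2).re := by
    fun_prop
  have hsphere : ∀ᶠ σ in 𝓝 ρ, ∀ u ∈ Metric.sphere (0 : n → ℂ) 1, 0 < (star u ⬝ᵥ σ *ᵥ u).re := by
    refine (isCompact_sphere 0 1).eventually_forall_of_forall_eventually fun u hu => ?_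
    refine hcont.continuousAt.preimage_mem_nhds (Ioi_mem_nhds ?_)
    have hu0 : u ≠ 0 := ne_zero_of_mem_sphere one_ne_zero ⟨u, hu⟩
    exact (RCLike.pos_iff.mp (hρ.dotProduct_mulVec_pos hu0)).1
  filter_upwards [hsphere] with σ hσ
  refine PosSemidef.of_dotProduct_mulVec_nonneg (isHermitian_hermPart σ) fun x => ?_
  rw [dotProduct_hermPart_mulVec, Complex.zero_le_real]
  rcases eq_or_ne x 0 with rfl | hx
  · simp
  obtain ⟨r, u, hu, rfl⟩ : ∃ (r : ℝ) (u : n → ℂ), u ∈ Metric.sphere 0 1 ∧ x = (r : ℂ) • u :=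
    ⟨‖x‖, (‖x‖⁻¹ : ℂ) • x, by simp [norm_smul, hx], by
      rw [smul_smul, mul_inv_cancel₀ (by simpa using hx), one_smul]⟩
  have hquad : (star ((r : ℂ) • u) ⬝ᵥ σ *ᵥ ((r : ℂ) • u)).re
      = r ^ 2 * (star u ⬝ᵥ σ *ᵥ u).re := by
    simp [star_smul, mulVec_smul, dotProduct_smul, smul_dotProduct, sq, mul_assoc]
  rw [hquad]
  exact mul_nonneg (sq_nonneg r) (hσ u hu).le

lemma exists_re_trace_mul_eq [Fintype n] [DecidableEq n] (ψ : Matrix n n ℂ →ₗ[ℝ] ℝ) :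
    ∃ τ : Matrix n n ℂ, ∀ σ, (τ * σ).trace.re = ψ σ := by
  refine ⟨of fun b a => ψ (single a b 1) - ψ (single a b Complex.I) * Complex.I, fun σ => ?_⟩
  have hsingle : ∀ a b (z : ℂ),
      ψ (single a b z) = z.re * ψ (single a b 1) + z.im * ψ (single a b Complex.I) := by
    intro a b z
    have hz : single a b z = z.re • single a b (1 : ℂ) + z.im • single a b Complex.I := by
      rw [smul_single, smul_single, ← single_add]
      congr 1
      simp
    rw [hz, map_add, map_smul, map_smul, smul_eq_mul, smul_eq_mul]
  calc (_ * σ).trace.re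
      = ∑ a, ∑ b, ((σ a b).re * ψ (single a b 1) + (σ a b).im * ψ (single a b Complex.I)) := by
        simp only [trace, diag, mul_apply, of_apply, Complex.re_sum]
        rw [Finset.sum_comm]
        simp [Complex.mul_re, mul_comm]
    _ = ∑ a, ∑ b, ψ (single a b (σ a b)) :=
        Finset.sum_congr rfl fun a _ => Finset.sum_congr rfl fun b _ => (hsingle a b _).symm
    _ = ψ σ := by
        conv_rhs => rw [matrix_eq_sum_single σ]
        simp only [map_sum]

lemma re_trace_hermPart_mul [Fintype n] (τ : Matrix n n ℂ) {σ : Matrix n n ℂ}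
    (hσ : σ.IsHermitian) : (hermPart τ * σ).trace.re = (τ * σ).trace.re := by
  have hconj : (τᴴ * σ).trace.re = (τ * σ).trace.re := by
    rw [← hσ.eq, ← conjTranspose_mul, trace_conjTranspose, trace_mul_comm, hσ.eq]
    exact Complex.conj_re _
  rw [hermPart_apply, smul_mul, add_mul, trace_smul, trace_add, Complex.real_smul,
    Complex.re_ofReal_mul, Complex.add_re, hconj]
  ring

end Matrix

section Entropy

variable {n : Type} [Fintype n] [DecidableEq n]

lemma vNEntropy_eq_sum_negMulLog_s14 {M : Matrix n n ℂ} (hM : M.IsHermitian) :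
    vNEntropy M = ∑ i, Real.negMulLog (hM.eigenvalues i) := by
  simp [vNEntropy, hM, Real.negMulLog, Finset.sum_neg_distrib]

lemma vNEntropy_nonneg_s14 {M : Matrix n n ℂ} (hM : M.PosSemidef) (htr : M.trace = 1) :
    0 ≤ vNEntropy M := by
  have hsum : ∑ i, hM.1.eigenvalues i = 1 := by
    simpa [htr] using congrArg Complex.re hM.1.trace_eq_sum_eigenvalues.symm
  rw [vNEntropy_eq_sum_negMulLog_s14 hM.1]
  refine Finset.sum_nonneg fun i _ => Real.negMulLog_nonneg (hM.eigenvalues_nonneg i) ?_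
  rw [← hsum]
  exact Finset.single_le_sum (fun j _ => hM.eigenvalues_nonneg j) (Finset.mem_univ i)

lemma vNEntropy_le_card {M : Matrix n n ℂ} (hM : M.PosSemidef) :
    vNEntropy M ≤ Fintype.card n := by
  rw [vNEntropy_eq_sum_negMulLog_s14 hM.1, ← nsmul_one, ← Finset.card_univ, ← Finset.sum_const]
  refine Finset.sum_le_sum fun i _ => ?_
  linarith [Real.negMulLog_le_one_sub_self (hM.eigenvalues_nonneg i), hM.eigenvalues_nonneg i]

end Entropy

namespace QChannel

variable {I O : Type} [Fintype I] [DecidableEq I] [Fintype O] [DecidableEq O] (N : QChannel I O)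

lemma posSemidef_app {σ : Matrix I I ℂ} (hσ : σ.PosSemidef) : (N.app σ).PosSemidef :=
  posSemidef_sum _ fun k _ => hσ.mul_mul_conjTranspose_same (N.A k)

lemma trace_app_s14 (σ : Matrix I I ℂ) : (N.app σ).trace = σ.trace := by
  simp_rw [app, trace_sum, trace_mul_cycle (N.A _), ← trace_sum, ← Finset.sum_mul, N.complete,
    Matrix.one_mul]

lemma vNEntropy_app_outer_nonneg {v : I → ℂ} (hv : IsUnitVec v) :
    0 ≤ vNEntropy (N.app (outer v)) :=
  vNEntropy_nonneg_s14 (N.posSemidef_app (posSemidef_outer v)) (by rw [trace_app_s14, trace_outer hv])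

lemma vNEntropy_app_le_card {σ : Matrix I I ℂ} (hσ : σ.PosSemidef) :
    vNEntropy (N.app σ) ≤ Fintype.card O :=
  vNEntropy_le_card (N.posSemidef_app hσ)

/-- The weights are not normalised, so that every positive semidefinite `σ`, not only a state,
has decompositions. -/
def ensembleOutEntropies (σ : Matrix I I ℂ) : Set ℝ :=
  {x | ∃ (n : ℕ) (p : Fin n → ℝ) (v : Fin n → I → ℂ),
    (∀ i, 0 ≤ p i) ∧ (∀ i, IsUnitVec (v i)) ∧
    (∑ i, (p i : ℂ) • outer (v i)) = σ ∧
    x = ∑ i, p i * vNEntropy (N.app (outer (v i)))}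

def outEntropyRoof (σ : Matrix I I ℂ) : ℝ := sInf (N.ensembleOutEntropies σ)

variable {N}

lemma sum_mem_ensembleOutEntropies {ι : Type} [Fintype ι] {p : ι → ℝ} {v : ι → I → ℂ}
    (hp : ∀ i, 0 ≤ p i) (hv : ∀ i, IsUnitVec (v i)) :
    ∑ i, p i * vNEntropy (N.app (outer (v i)))
      ∈ N.ensembleOutEntropies (∑ i, (p i : ℂ) • outer (v i)) := by
  let e := Fintype.equivFin ι
  exact ⟨_, p ∘ e.symm, v ∘ e.symm, fun _ => hp _, fun _ => hv _,
    e.symm.sum_comp fun i => (p i : ℂ) • outer (v i), (e.symm.sum_comp _).symm⟩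

lemma nonneg_of_mem_ensembleOutEntropies {σ : Matrix I I ℂ} {x : ℝ}
    (hx : x ∈ N.ensembleOutEntropies σ) : 0 ≤ x := by
  obtain ⟨n, p, v, hp, hv, -, rfl⟩ := hx
  exact Finset.sum_nonneg fun i _ => mul_nonneg (hp i) (N.vNEntropy_app_outer_nonneg (hv i))

lemma bddBelow_ensembleOutEntropies (σ : Matrix I I ℂ) : BddBelow (N.ensembleOutEntropies σ) :=
  ⟨0, fun _ => nonneg_of_mem_ensembleOutEntropies⟩

lemma add_mem_ensembleOutEntropies {σ τ : Matrix I I ℂ} {x y : ℝ}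
    (hx : x ∈ N.ensembleOutEntropies σ) (hy : y ∈ N.ensembleOutEntropies τ) :
    x + y ∈ N.ensembleOutEntropies (σ + τ) := by
  obtain ⟨n, p, v, hp, hv, rfl, rfl⟩ := hx
  obtain ⟨m, q, w, hq, hw, rfl, rfl⟩ := hy
  simpa using sum_mem_ensembleOutEntropies (p := Sum.elim p q) (v := Sum.elim v w)
    (Sum.forall.mpr ⟨hp, hq⟩) (Sum.forall.mpr ⟨hv, hw⟩)

lemma smul_mem_ensembleOutEntropies {σ : Matrix I I ℂ} {x a : ℝ}
    (hx : x ∈ N.ensembleOutEntropies σ) (ha : 0 ≤ a) :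
    a * x ∈ N.ensembleOutEntropies (a • σ) := by
  obtain ⟨n, p, v, hp, hv, rfl, rfl⟩ := hx
  refine ⟨n, fun i => a * p i, v, fun i => mul_nonneg ha (hp i), hv, ?_, ?_⟩
  · simp only [Finset.smul_sum, Complex.ofReal_mul, mul_smul, Complex.coe_smul]
  · simp [Finset.mul_sum, mul_assoc]

lemma exists_mem_ensembleOutEntropies_le {σ : Matrix I I ℂ} (hσ : σ.PosSemidef) :
    ∃ x ∈ N.ensembleOutEntropies σ, x ≤ σ.trace.re * Fintype.card O := by
  have hmem := sum_mem_ensembleOutEntropies (N := N) hσ.eigenvalues_nonneg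
    hσ.1.isUnitVec_eigenvectorBasis
  rw [← hσ.1.eq_sum_eigenvalues_smul_outer] at hmem
  refine ⟨_, hmem, ?_⟩
  calc _ ≤ ∑ i, hσ.1.eigenvalues i * (Fintype.card O : ℝ) :=
        Finset.sum_le_sum fun i _ => mul_le_mul_of_nonneg_left
          (N.vNEntropy_app_le_card (posSemidef_outer _)) (hσ.eigenvalues_nonneg i)
    _ = σ.trace.re * Fintype.card O := by simp [hσ.1.trace_eq_sum_eigenvalues, Finset.sum_mul]

lemma nonempty_ensembleOutEntropies {σ : Matrix I I ℂ} (hσ : σ.PosSemidef) :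
    (N.ensembleOutEntropies σ).Nonempty :=
  let ⟨x, hx, _⟩ := exists_mem_ensembleOutEntropies_le (N := N) hσ; ⟨x, hx⟩

lemma outEntropyRoof_le_trace_mul {σ : Matrix I I ℂ} (hσ : σ.PosSemidef) :
    N.outEntropyRoof σ ≤ σ.trace.re * Fintype.card O := by
  obtain ⟨x, hx, hle⟩ := exists_mem_ensembleOutEntropies_le (N := N) hσ
  exact csInf_le_of_le (bddBelow_ensembleOutEntropies σ) hx hle

lemma outEntropyRoof_outer_le {v : I → ℂ} (hv : IsUnitVec v) :
    N.outEntropyRoof (outer v) ≤ vNEntropy (N.app (outer v)) := by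
  refine csInf_le (bddBelow_ensembleOutEntropies _) ?_
  simpa using sum_mem_ensembleOutEntropies (N := N) (p := fun _ : Unit => 1) (v := fun _ => v)
    (fun _ => zero_le_one) (fun _ => hv)

lemma convexOn_outEntropyRoof :
    ConvexOn ℝ {σ : Matrix I I ℂ | σ.PosSemidef} N.outEntropyRoof := by
  refine ⟨fun σ hσ τ hτ a b ha hb _ => (hσ.smul ha).add (hτ.smul hb),
    fun σ hσ τ hτ a b ha hb hab => le_of_forall_pos_le_add fun ε hε => ?_⟩
  obtain ⟨x, hx, hxlt⟩ := exists_lt_of_csInf_lt (nonempty_ensembleOutEntropies hσ)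
    (lt_add_of_pos_right (N.outEntropyRoof σ) hε)
  obtain ⟨y, hy, hylt⟩ := exists_lt_of_csInf_lt (nonempty_ensembleOutEntropies hτ)
    (lt_add_of_pos_right (N.outEntropyRoof τ) hε)
  have hroof : N.outEntropyRoof (a • σ + b • τ) ≤ a * x + b * y :=
    csInf_le (bddBelow_ensembleOutEntropies _)
      (add_mem_ensembleOutEntropies (smul_mem_ensembleOutEntropies hx ha)
        (smul_mem_ensembleOutEntropies hy hb))
  simp only [smul_eq_mul]
  nlinarith [mul_le_mul_of_nonneg_left hxlt.le ha, mul_le_mul_of_nonneg_left hylt.le hb]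

/-- Every decomposition of a state has total weight one. -/
lemma cHolevoCap_eq_sub_outEntropyRoof {ρ : Matrix I I ℂ} (hρ : ρ.PosSemidef)
    (hρtr : ρ.trace = 1) :
    cHolevoCap N ρ = vNEntropy (N.app ρ) - N.outEntropyRoof ρ := by
  rw [outEntropyRoof, antitone_const_tsub.map_csInf_of_continuousAt
    (continuous_sub_left _).continuousAt (nonempty_ensembleOutEntropies hρ)
    (bddBelow_ensembleOutEntropies ρ), cHolevoCap]
  congr 1
  ext x
  constructor
  · rintro ⟨n, p, v, hp, -, hv, hs, rfl⟩
    exact ⟨_, ⟨n, p, v, hp, hv, hs, rfl⟩, rfl⟩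
  · rintro ⟨_, ⟨n, p, v, hp, hv, hs, rfl⟩, rfl⟩
    have hweights := congrArg trace hs
    simp only [trace_sum, trace_smul, trace_outer (hv _), smul_eq_mul, mul_one, hρtr] at hweights
    exact ⟨n, p, v, hp, by exact_mod_cast hweights, hv, hs, rfl⟩

variable (N) in
lemma exists_outEntropyRoof_add_le {ρ : Matrix I I ℂ} (hρ : ρ.PosDef) :
    ∃ g : Matrix I I ℂ →ₗ[ℝ] ℝ, ∀ σ : Matrix I I ℂ, σ.PosSemidef →
      N.outEntropyRoof ρ + g (σ - ρ) ≤ N.outEntropyRoof σ := by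
  have hint : ρ ∈ interior (hermPart ⁻¹' {σ : Matrix I I ℂ | σ.PosSemidef}) :=
    mem_interior_iff_mem_nhds.mpr hρ.eventually_posSemidef_hermPart
  have hbdd :
      ∀ᶠ σ in 𝓝 ρ, N.outEntropyRoof (hermPart σ) ≤ (ρ.trace.re + 1) * Fintype.card O := by
    have htr : ∀ᶠ σ in 𝓝 ρ, σ.trace.re < ρ.trace.re + 1 :=
      (Complex.continuous_re.comp continuous_id.matrix_trace).continuousAt.preimage_mem_nhds
        (Iio_mem_nhds (lt_add_one _))
    filter_upwards [hρ.eventually_posSemidef_hermPart, htr] with σ hσ hσtr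
    calc N.outEntropyRoof (hermPart σ) ≤ (hermPart σ).trace.re * Fintype.card O :=
          outEntropyRoof_le_trace_mul hσ
      _ ≤ (ρ.trace.re + 1) * Fintype.card O := by
          rw [re_trace_hermPart]
          gcongr
  obtain ⟨g, hg⟩ :=
    (N.convexOn_outEntropyRoof.comp_linearMap hermPart).exists_subgradient hint hbdd
  refine ⟨g.toLinearMap, fun σ hσ => ?_⟩
  have h := hg σ (by simpa [hσ.1.hermPart_eq] using hσ)
  simpa [hσ.1.hermPart_eq, hρ.1.hermPart_eq] using h

end QChannel

/-- The linear programming dual formulation of the constrained Holevo capacity: for a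
positive definite density matrix `ρ` there is a Hermitian `τ` with
`⟨v|τ|v⟩ ≤ H(N(|v⟩⟨v|))` for all unit vectors `v` and
`χ_N(ρ) = H(N(ρ)) - Tr(τρ)`. -/
theorem cHolevoCap_lp_dual {dI dO : ℕ} (N : QChannel (Fin dI) (Fin dO))
    (ρ : Matrix (Fin dI) (Fin dI) ℂ) (hρ : ρ.PosDef) (hρtr : ρ.trace = 1) :
    ∃ τ : Matrix (Fin dI) (Fin dI) ℂ, τ.IsHermitian ∧
      (∀ v : Fin dI → ℂ, IsUnitVec v →
        (star v ⬝ᵥ τ *ᵥ v).re ≤ vNEntropy (N.app (outer v))) ∧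
      cHolevoCap N ρ = vNEntropy (N.app ρ) - ((τ * ρ).trace).re := by
  obtain ⟨g, hg⟩ := N.exists_outEntropyRoof_add_le hρ
  obtain ⟨τ, hτ⟩ := exists_re_trace_mul_eq g
  set c := N.outEntropyRoof ρ - g ρ
  have htrace : ∀ σ, σ.IsHermitian →
      ((hermPart τ + c • 1) * σ).trace.re = g σ + c * σ.trace.re := fun σ hσ => by
    rw [add_mul, trace_add, Complex.add_re, re_trace_hermPart_mul τ hσ, hτ, smul_mul, one_mul,
      trace_smul, Complex.smul_re, smul_eq_mul]
  refine ⟨hermPart τ + c • 1,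
    (isHermitian_hermPart τ).add (isHermitian_one.smul (IsSelfAdjoint.all c)), fun v hv => ?_, ?_⟩
  · rw [← trace_mul_outer, htrace _ (posSemidef_outer v).1, trace_outer hv, Complex.one_re,
      mul_one]
    linarith [map_sub g (outer v) ρ, hg _ (posSemidef_outer v), N.outEntropyRoof_outer_le hv]
  · rw [htrace ρ hρ.1, hρtr, N.cHolevoCap_eq_sub_outEntropyRoof hρ.posSemidef hρtr,
      Complex.one_re]
    ring
end
end
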